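/- Let Ω ⊆ ℝ³ be open, u : Ω → ℝ³ smooth and divergence-free, α ∈ ℝ, and suppose the operator I + α u·∇ is injective on smooth scalar functions. If (u, π) is a smooth solution of −Δu − α u·∇Δu + Re·u·∇u + ∇π = ∇·L(u), and p is a smooth function with π = p + α u·∇p, then ϱ := −Δu + ∇p satisfies ϱ + α u·∇ϱ = ∇·(L(u) − Re·u⊗u − α p (∇u)ᵀ). -/

import Mathlib

/-- Partial derivative in direction `i` of a scalar field on `ℝ³`. -/
noncomputable def pd (i : Fin 3) (f : (Fin 3 → ℝ) → ℝ) (x : Fin 3 → ℝ) : ℝ :=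
  fderiv ℝ f x (Pi.single i 1)

private lemma pd_contDiff {f : (Fin 3 → ℝ) → ℝ} (hf : ContDiff ℝ (⊤ : ℕ∞) f) (k : Fin 3) :
    ContDiff ℝ (⊤ : ℕ∞) (pd k f) := by
  show ContDiff ℝ (⊤ : ℕ∞) (fun x => fderiv ℝ f x (Pi.single k 1))
  exact (hf.fderiv_right (by simp)).clm_apply contDiff_const

private lemma pd_add {f g : (Fin 3 → ℝ) → ℝ} {x : Fin 3 → ℝ}
    (hf : DifferentiableAt ℝ f x) (hg : DifferentiableAt ℝ g x) (k : Fin 3) :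
    pd k (fun y => f y + g y) x = pd k f x + pd k g x := by
  simp only [pd, fderiv_fun_add hf hg, ContinuousLinearMap.add_apply]

private lemma pd_sub {f g : (Fin 3 → ℝ) → ℝ} {x : Fin 3 → ℝ}
    (hf : DifferentiableAt ℝ f x) (hg : DifferentiableAt ℝ g x) (k : Fin 3) :
    pd k (fun y => f y - g y) x = pd k f x - pd k g x := by
  simp only [pd, fderiv_fun_sub hf hg, ContinuousLinearMap.sub_apply]

private lemma pd_neg {f : (Fin 3 → ℝ) → ℝ} {x : Fin 3 → ℝ} (k : Fin 3) :
    pd k (fun y => -f y) x = -pd k f x := by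
  simp only [pd, fderiv_fun_neg, ContinuousLinearMap.neg_apply]

private lemma pd_const_mul {f : (Fin 3 → ℝ) → ℝ} {x : Fin 3 → ℝ}
    (hf : DifferentiableAt ℝ f x) (c : ℝ) (k : Fin 3) :
    pd k (fun y => c * f y) x = c * pd k f x := by
  simp only [pd, fderiv_const_mul hf, ContinuousLinearMap.smul_apply, smul_eq_mul]

private lemma pd_mul {f g : (Fin 3 → ℝ) → ℝ} {x : Fin 3 → ℝ}
    (hf : DifferentiableAt ℝ f x) (hg : DifferentiableAt ℝ g x) (k : Fin 3) :
    pd k (fun y => f y * g y) x = f x * pd k g x + g x * pd k f x := by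
  simp only [pd, fderiv_fun_mul hf hg, ContinuousLinearMap.add_apply,
    ContinuousLinearMap.smul_apply, smul_eq_mul]

private lemma pd_sum {F : Fin 3 → (Fin 3 → ℝ) → ℝ} {x : Fin 3 → ℝ}
    (h : ∀ j, DifferentiableAt ℝ (F j) x) (k : Fin 3) :
    pd k (fun y => ∑ j, F j y) x = ∑ j, pd k (F j) x := by
  simp only [pd, fderiv_fun_sum (fun j _ => h j), ContinuousLinearMap.sum_apply]

private lemma pd_congr {f g : (Fin 3 → ℝ) → ℝ} {x : Fin 3 → ℝ}
    (h : f =ᶠ[nhds x] g) (k : Fin 3) : pd k f x = pd k g x := by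
  simp only [pd]
  rw [Filter.EventuallyEq.fderiv_eq h]

private lemma pd_comm {f : (Fin 3 → ℝ) → ℝ} (hf : ContDiff ℝ (⊤ : ℕ∞) f) (i j : Fin 3)
    (x : Fin 3 → ℝ) : pd i (pd j f) x = pd j (pd i f) x := by
  have hdf : Differentiable ℝ (fderiv ℝ f) :=
    (hf.fderiv_right (m := (⊤ : ℕ∞)) (by simp)).differentiable (by simp)
  have hsym := (hf.contDiffAt (x := x)).isSymmSndFDerivAt (by rw [minSmoothness_of_isRCLikeNormedField]; exact WithTop.coe_le_coe.mpr le_top)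
  have key : ∀ v w : Fin 3 → ℝ,
      fderiv ℝ (fun y => fderiv ℝ f y v) x w = fderiv ℝ (fderiv ℝ f) x w v := by
    intro v w
    rw [fderiv_clm_apply hdf.differentiableAt (differentiableAt_const v)]
    simp
  show fderiv ℝ (fun y => fderiv ℝ f y (Pi.single j 1)) x (Pi.single i 1)
      = fderiv ℝ (fun y => fderiv ℝ f y (Pi.single i 1)) x (Pi.single j 1)
  rw [key, key, hsym]

/-- `(i,j)` entry of `L(u) = α (∇u)ᵀ(∇u + (∇u)ᵀ) + (α+α₂)(∇u + (∇u)ᵀ)²`,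
where `(∇u)ᵢⱼ = ∂ⱼuᵢ`. -/
noncomputable def Lmat (α α₂ : ℝ) (u : Fin 3 → (Fin 3 → ℝ) → ℝ)
    (i j : Fin 3) (x : Fin 3 → ℝ) : ℝ :=
  α * ∑ k, pd i (u k) x * (pd j (u k) x + pd k (u j) x)
    + (α + α₂) * ∑ k, (pd k (u i) x + pd i (u k) x) * (pd j (u k) x + pd k (u j) x)

/-- Converse direction: if `(u, π)` solves the second-grade fluid equation,
`I + α u·∇` is injective on smooth scalar functions, and `π = p + α u·∇p`,
then `ϱ := −Δu + ∇p` solves the transport equation of the decoupled system. -/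
theorem stmt4 (Ω : Set (Fin 3 → ℝ)) (hΩ : IsOpen Ω)
    (u : Fin 3 → (Fin 3 → ℝ) → ℝ) (π p : (Fin 3 → ℝ) → ℝ) (α α₂ Re : ℝ)
    (hu : ∀ i, ContDiff ℝ (⊤ : ℕ∞) (u i)) (hπ : ContDiff ℝ (⊤ : ℕ∞) π) (hp : ContDiff ℝ (⊤ : ℕ∞) p)
    (hdiv : ∀ x ∈ Ω, (∑ j, pd j (u j) x) = 0)
    (hinj : ∀ f g : (Fin 3 → ℝ) → ℝ, ContDiff ℝ (⊤ : ℕ∞) f → ContDiff ℝ (⊤ : ℕ∞) g →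
      (∀ x ∈ Ω, f x + α * ∑ j, u j x * pd j f x
                  = g x + α * ∑ j, u j x * pd j g x) →
      ∀ x ∈ Ω, f x = g x)
    (heq : ∀ x ∈ Ω, ∀ i : Fin 3,
      -(∑ j, pd j (pd j (u i)) x)
        - α * ∑ j, u j x * pd j (fun y => ∑ k, pd k (pd k (u i)) y) x
        + Re * ∑ j, u j x * pd j (u i) x
        + pd i π x
      = ∑ j, pd j (fun y => Lmat α α₂ u i j y) x)
    (hπp : ∀ x ∈ Ω, π x = p x + α * ∑ j, u j x * pd j p x) :
    ∀ x ∈ Ω, ∀ i : Fin 3,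
      (-(∑ j, pd j (pd j (u i)) x) + pd i p x)
        + α * ∑ j, u j x *
            pd j (fun y => -(∑ k, pd k (pd k (u i)) y) + pd i p y) x
      = ∑ j, pd j (fun y =>
          Lmat α α₂ u i j y - Re * (u i y * u j y) - α * p y * pd i (u j) y) x := by
  intro x hx i
  have hmem : Ω ∈ nhds x := hΩ.mem_nhds hx
  have D : ∀ {f : (Fin 3 → ℝ) → ℝ}, ContDiff ℝ (⊤ : ℕ∞) f → DifferentiableAt ℝ f x :=
    fun hf => (hf.differentiable (by simp)).differentiableAt
  have hU : ∀ a b, ContDiff ℝ (⊤ : ℕ∞) (pd b (u a)) := fun a b => pd_contDiff (hu a) b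
  have hU2 : ∀ a b c, ContDiff ℝ (⊤ : ℕ∞) (pd c (pd b (u a))) := fun a b c => pd_contDiff (hU a b) c
  have hpdp : ∀ b, ContDiff ℝ (⊤ : ℕ∞) (pd b p) := fun b => pd_contDiff hp b
  have hLap : ContDiff ℝ (⊤ : ℕ∞) (fun y => ∑ k, pd k (pd k (u i)) y) :=
    ContDiff.sum fun k _ => hU2 i k k
  have hLm : ∀ j, ContDiff ℝ (⊤ : ℕ∞) (fun y => Lmat α α₂ u i j y) := by
    intro j
    unfold Lmat
    exact (contDiff_const.mul (ContDiff.sum fun k _ =>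
        (hU k i).mul ((hU k j).add (hU j k)))).add
      (contDiff_const.mul (ContDiff.sum fun k _ =>
        ((hU i k).add (hU k i)).mul ((hU k j).add (hU j k))))
  -- expansion of the left-hand transported quantity
  have EL : ∀ j, pd j (fun y => -(∑ k, pd k (pd k (u i)) y) + pd i p y) x
      = -(pd j (fun y => ∑ k, pd k (pd k (u i)) y) x) + pd j (pd i p) x := by
    intro j
    rw [pd_add (D hLap.neg) (D (hpdp i)) j, pd_neg j]
  -- expansion of each term on the right-hand side
  have EB : ∀ j, pd j (fun y =>
        Lmat α α₂ u i j y - Re * (u i y * u j y) - α * p y * pd i (u j) y) x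
      = pd j (fun y => Lmat α α₂ u i j y) x
        - Re * (u i x * pd j (u j) x + u j x * pd j (u i) x)
        - ((α * p x) * pd j (pd i (u j)) x + pd i (u j) x * pd j (fun y => α * p y) x) := by
    intro j
    rw [pd_sub (D (((hLm j).sub (contDiff_const.mul ((hu i).mul (hu j))))))
        (D ((contDiff_const.mul hp).mul (hU j i))) j,
      pd_sub (D (hLm j)) (D (contDiff_const.mul ((hu i).mul (hu j)))) j,
      pd_const_mul (D ((hu i).mul (hu j))) Re j,
      pd_mul (D (hu i)) (D (hu j)) j,
      pd_mul (D (contDiff_const.mul hp)) (D (hU j i)) j]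
  have EB' : ∀ j, pd j (fun y => α * p y) x = α * pd j p x :=
    fun j => pd_const_mul (D hp) α j
  -- the pressure relation, differentiated
  have Eπ : pd i π x = pd i p x
      + α * ∑ j, (u j x * pd i (pd j p) x + pd j p x * pd i (u j) x) := by
    have hev : π =ᶠ[nhds x] (fun y => p y + α * ∑ j, u j y * pd j p y) :=
      Filter.eventuallyEq_of_mem hmem hπp
    rw [pd_congr hev i,
      pd_add (D hp) (D (contDiff_const.mul (ContDiff.sum fun j _ => (hu j).mul (hpdp j)))) i,
      pd_const_mul (D (ContDiff.sum fun j _ => (hu j).mul (hpdp j))) α i,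
      pd_sum (fun j => D ((hu j).mul (hpdp j))) i]
    congr 2
    exact Finset.sum_congr rfl fun j _ => pd_mul (D (hu j)) (D (hpdp j)) i
  -- symmetry of second derivatives
  have H4 : ∀ j, pd i (pd j p) x = pd j (pd i p) x := fun j => pd_comm hp i j x
  have H5 : ∀ j, pd j (pd i (u j)) x = pd i (pd j (u j)) x := fun j => pd_comm (hu j) j i x
  -- divergence-free consequences
  have Hdiv : (∑ j, pd j (u j) x) = 0 := hdiv x hx
  have Hdiv2 : (∑ j, pd i (pd j (u j)) x) = 0 := by
    rw [← pd_sum (fun j => D (hU j j)) i]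
    have hev0 : (fun y => ∑ j, pd j (u j) y) =ᶠ[nhds x] (fun _ => (0:ℝ)) :=
      Filter.eventuallyEq_of_mem hmem hdiv
    rw [pd_congr hev0 i]
    simp [pd]
  have heq' := heq x hx i
  have EL0 := EL 0; have EL1 := EL 1; have EL2 := EL 2
  have EB0 := EB 0; have EB1 := EB 1; have EB2 := EB 2
  have H40 := H4 0; have H41 := H4 1; have H42 := H4 2
  have H50 := H5 0; have H51 := H5 1; have H52 := H5 2
  have EB'0 := EB' 0; have EB'1 := EB' 1; have EB'2 := EB' 2
  simp only [Fin.sum_univ_three] at EL0 EL1 EL2 EB0 EB1 EB2 Eπ heq' Hdiv Hdiv2 ⊢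
  linear_combination (α * u 0 x) * EL0 + (α * u 1 x) * EL1 + (α * u 2 x) * EL2
    + heq' - Eπ - EB0 - EB1 - EB2
    - (α * u 0 x) * H40 - (α * u 1 x) * H41 - (α * u 2 x) * H42
    + (Re * u i x) * Hdiv + (α * p x) * (H50 + H51 + H52) + (α * p x) * Hdiv2
    + pd i (u 0) x * EB'0 + pd i (u 1) x * EB'1 + pd i (u 2) x * EB'2
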